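/- Assume (Φ1), assume F(x,t) ≤ c₂|t|^{q(x)} for all x ∈ Ω and t ∈ ℝ with a constant c₂ > 0, and assume there is c > 0 such that ‖u‖_{q(·)} ≤ c·‖u‖ for all u ∈ X. Then there exist ρ ∈ (0,1), α > 0 and λ_* > 0 such that for every λ ∈ (0, λ_*) and every u ∈ X with ‖u‖ = ρ, one has J_λ(u) ≥ α > 0. -/

import Mathlib

open MeasureTheory Set Filter
open scoped ENNReal

noncomputable section

abbrev Eucl (N : ℕ) := EuclideanSpace ℝ (Fin N)

variable {N : ℕ}

/-- `Q = ℝ^{2N} \ (CΩ)^2`. -/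
def Qset (Ω : Set (Eucl N)) : Set (Eucl N × Eucl N) := (Ωᶜ ×ˢ Ωᶜ)ᶜ

/-- `φ_{x,y}(t) = a(x,y,|t|) t` for `t ≠ 0`, `φ_{x,y}(0) = 0`. -/
def phiF (a : Eucl N → Eucl N → ℝ → ℝ) (x y : Eucl N) (t : ℝ) : ℝ :=
  if t = 0 then 0 else a x y |t| * t

/-- `Φ_{x,y}(t) = ∫₀ᵗ φ_{x,y}(τ) dτ`. -/
def PhiF (a : Eucl N → Eucl N → ℝ → ℝ) (x y : Eucl N) (t : ℝ) : ℝ :=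
  ∫ τ in (0:ℝ)..t, phiF a x y τ

/-- Gagliardo-type modular on `Q` at scale `lam`. -/
def modQ (a : Eucl N → Eucl N → ℝ → ℝ) (s : ℝ) (Ω : Set (Eucl N))
    (u : Eucl N → ℝ) (lam : ℝ) : ℝ≥0∞ :=
  ∫⁻ p in Qset Ω, ENNReal.ofReal
    (PhiF a p.1 p.2 (|u p.1 - u p.2| / (lam * dist p.1 p.2 ^ s)) / dist p.1 p.2 ^ (N : ℝ))

/-- Gagliardo-type modular on `Ω × Ω` at scale `lam`. -/
def modOO (a : Eucl N → Eucl N → ℝ → ℝ) (s : ℝ) (Ω : Set (Eucl N))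
    (u : Eucl N → ℝ) (lam : ℝ) : ℝ≥0∞ :=
  ∫⁻ p in Ω ×ˢ Ω, ENNReal.ofReal
    (PhiF a p.1 p.2 (|u p.1 - u p.2| / (lam * dist p.1 p.2 ^ s)) / dist p.1 p.2 ^ (N : ℝ))

/-- modular `∫_Ω Φ̂_x(|u|/λ)`. -/
def modO (a : Eucl N → Eucl N → ℝ → ℝ) (Ω : Set (Eucl N))
    (u : Eucl N → ℝ) (lam : ℝ) : ℝ≥0∞ :=
  ∫⁻ x in Ω, ENNReal.ofReal (PhiF a x x (|u x| / lam))

/-- modular `∫_{CΩ} β Φ̂_x(|u|/λ)`. -/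
def modB (a : Eucl N → Eucl N → ℝ → ℝ) (Ω : Set (Eucl N)) (β : Eucl N → ℝ)
    (u : Eucl N → ℝ) (lam : ℝ) : ℝ≥0∞ :=
  ∫⁻ x in Ωᶜ, ENNReal.ofReal (β x * PhiF a x x (|u x| / lam))

/-- Luxemburg infimum of a modular family (`∞` if no admissible `λ`). -/
def lux (m : ℝ → ℝ≥0∞) : ℝ≥0∞ :=
  sInf {l : ℝ≥0∞ | ∃ lam : ℝ, 0 < lam ∧ l = ENNReal.ofReal lam ∧ m lam ≤ 1}

/-- `‖u‖_X = [u]_{s,Φ,Q} + ‖u‖_{Φ̂} + ‖u‖_{Φ̂,β,CΩ}`. -/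
def normX (a : Eucl N → Eucl N → ℝ → ℝ) (s : ℝ) (Ω : Set (Eucl N)) (β : Eucl N → ℝ)
    (u : Eucl N → ℝ) : ℝ≥0∞ :=
  lux (modQ a s Ω u) + lux (modO a Ω u) + lux (modB a Ω β u)

/-- the modular `ρ_s`. -/
def rhoS (a : Eucl N → Eucl N → ℝ → ℝ) (s : ℝ) (Ω : Set (Eucl N)) (β : Eucl N → ℝ)
    (u : Eucl N → ℝ) : ℝ≥0∞ :=
  modQ a s Ω u 1 + modO a Ω u 1 + modB a Ω β u 1

/-- the modular norm `‖u‖ = inf {λ > 0 : ρ_s(u/λ) ≤ 1}`. -/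
def normM (a : Eucl N → Eucl N → ℝ → ℝ) (s : ℝ) (Ω : Set (Eucl N)) (β : Eucl N → ℝ)
    (u : Eucl N → ℝ) : ℝ≥0∞ :=
  sInf {l : ℝ≥0∞ | ∃ lam : ℝ, 0 < lam ∧ l = ENNReal.ofReal lam ∧
    rhoS a s Ω β (fun x => u x / lam) ≤ 1}

/-- `X` described via the norm `‖·‖_X`. -/
def XsetX (a : Eucl N → Eucl N → ℝ → ℝ) (s : ℝ) (Ω : Set (Eucl N)) (β : Eucl N → ℝ) :
    Set (Eucl N → ℝ) :=
  {u | Measurable u ∧ normX a s Ω β u < ⊤}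

/-- `X` described via the modular norm `‖·‖`. -/
def XsetM (a : Eucl N → Eucl N → ℝ → ℝ) (s : ℝ) (Ω : Set (Eucl N)) (β : Eucl N → ℝ) :
    Set (Eucl N → ℝ) :=
  {u | Measurable u ∧ (∃ lam : ℝ, 0 < lam ∧ rhoS a s Ω β (fun x => u x / lam) < ⊤) ∧
    normM a s Ω β u < ⊤}

/-- the fractional difference quotient `D^s u`. -/
def Du (s : ℝ) (u : Eucl N → ℝ) (p : Eucl N × Eucl N) : ℝ :=
  (u p.1 - u p.2) / dist p.1 p.2 ^ s

/-- `a(x,y,|D^s u|) D^s u`, with the convention that it vanishes when `u x = u y`. -/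
def Ku (a : Eucl N → Eucl N → ℝ → ℝ) (s : ℝ) (u : Eucl N → ℝ) (p : Eucl N × Eucl N) : ℝ :=
  if u p.1 = u p.2 then 0 else a p.1 p.2 |Du s u p| * Du s u p

/-- the form `A_s(u,v)`. -/
def Aform (a : Eucl N → Eucl N → ℝ → ℝ) (s : ℝ) (Ω : Set (Eucl N)) (β : Eucl N → ℝ)
    (u v : Eucl N → ℝ) : ℝ :=
  (1/2) * (∫ p in Qset Ω, Ku a s u p * Du s v p / dist p.1 p.2 ^ (N : ℝ))
  + (∫ x in Ω, a x x |u x| * u x * v x)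
  + ∫ x in Ωᶜ, β x * (a x x |u x| * u x * v x)

/-- the nonlocal normal derivative `𝒩^s_a u` on `CΩ`. -/
def Nop (a : Eucl N → Eucl N → ℝ → ℝ) (s : ℝ) (Ω : Set (Eucl N)) (u : Eucl N → ℝ)
    (x : Eucl N) : ℝ :=
  ∫ y in Ω, Ku a s u (x, y) / dist x y ^ ((N : ℝ) + s)

/-- `F(x,t) = ∫₀ᵗ f(x,τ) dτ`. -/
def Ff (f : Eucl N → ℝ → ℝ) (x : Eucl N) (t : ℝ) : ℝ := ∫ τ in (0:ℝ)..t, f x τ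

/-- the energy functional `J_λ`. -/
def Jlam (a : Eucl N → Eucl N → ℝ → ℝ) (s : ℝ) (Ω : Set (Eucl N)) (β : Eucl N → ℝ)
    (f : Eucl N → ℝ → ℝ) (lam : ℝ) (u : Eucl N → ℝ) : ℝ :=
  (1/2) * (modQ a s Ω u 1).toReal + (modO a Ω u 1).toReal + (modB a Ω β u 1).toReal
    - lam * ∫ x in Ω, Ff f x (u x)

/-- the variable-exponent Luxemburg norm `‖u‖_{q(·)}` on `Ω`. -/
def normq (Ω : Set (Eucl N)) (q : Eucl N → ℝ) (u : Eucl N → ℝ) : ℝ≥0∞ :=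
  sInf {l : ℝ≥0∞ | ∃ lam : ℝ, 0 < lam ∧ l = ENNReal.ofReal lam ∧
    (∫⁻ x in Ω, ENNReal.ofReal (|u x / lam| ^ q x)) ≤ 1}

/-!
On the sphere `‖u‖ = ρ < 1` three estimates combine. The upper half of (Φ1), `t φ(t) ≤ φ⁺ Φ(t)`,
makes `t ↦ Φ(t) / t^φ⁺` nonincreasing, so `Φ(R t) ≤ R^φ⁺ Φ(t)` for `R ≥ 1`; since `‖u‖ > ρ/2`
forces `ρ_s(2u/ρ) > 1`, this gives `ρ_s(u) ≥ (ρ/2)^φ⁺`. Since `Φ` is nondecreasing on `[0, ∞)`,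
`‖u‖ < 1` gives `ρ_s(u) ≤ 1`, so the modular is finite. Finally `‖u‖_{q(·)} ≤ cρ < 1` bounds
`∫ |u|^{q(x)}` by `1`, hence `∫ F(x, u) ≤ c₂`, and
`J_λ(u) ≥ ρ_s(u)/2 - λ c₂ ≥ (ρ/2)^φ⁺ / 4` once `λ < (ρ/2)^φ⁺ / (4 c₂)`.
-/

open Topology

theorem antitoneOn_div_rpow_of_mul_deriv_le {Φ φ : ℝ → ℝ} {p : ℝ}
    (hΦ : ∀ t, 0 < t → HasDerivAt Φ (φ t) t) (hφ : ∀ t, 0 < t → t * φ t ≤ p * Φ t) :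
    AntitoneOn (fun t => Φ t / t ^ p) (Ioi 0) := by
  have hderiv : ∀ t, 0 < t → HasDerivAt (fun t => Φ t / t ^ p)
      ((φ t * t ^ p - Φ t * (p * t ^ (p - 1))) / (t ^ p) ^ 2) t := fun t ht =>
    (hΦ t ht).div (Real.hasDerivAt_rpow_const (Or.inl ht.ne')) (Real.rpow_pos_of_pos ht p).ne'
  refine antitoneOn_of_hasDerivWithinAt_nonpos (convex_Ioi 0)
    (fun t ht => (hderiv t ht).continuousAt.continuousWithinAt)
    (fun t ht => (hderiv t (interior_subset ht)).hasDerivWithinAt) fun t ht => ?_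
  rw [interior_Ioi, mem_Ioi] at ht
  have hnum : φ t * t ^ p - Φ t * (p * t ^ (p - 1)) = t ^ (p - 1) * (t * φ t - p * Φ t) := by
    rw [Real.rpow_sub_one ht.ne']
    field_simp
  rw [hnum]
  exact div_nonpos_of_nonpos_of_nonneg
    (mul_nonpos_of_nonneg_of_nonpos (by positivity) (sub_nonpos.2 (hφ t ht))) (sq_nonneg _)

theorem apply_mul_le_rpow_mul_of_mul_deriv_le {Φ φ : ℝ → ℝ} {p : ℝ}
    (hΦ : ∀ t, 0 < t → HasDerivAt Φ (φ t) t) (hφ : ∀ t, 0 < t → t * φ t ≤ p * Φ t)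
    {R t : ℝ} (hR : 1 ≤ R) (ht : 0 < t) : Φ (R * t) ≤ R ^ p * Φ t := by
  have hR0 : 0 < R := zero_lt_one.trans_le hR
  have h := antitoneOn_div_rpow_of_mul_deriv_le hΦ hφ ht (mul_pos hR0 ht)
    (le_mul_of_one_le_left ht.le hR)
  simp only at h
  rw [Real.mul_rpow hR0.le ht.le, ← div_div,
    div_le_div_iff_of_pos_right (Real.rpow_pos_of_pos ht p),
    div_le_iff₀ (Real.rpow_pos_of_pos hR0 p)] at h
  exact h.trans_eq (mul_comm _ _)

section Orlicz

variable {a : Eucl N → Eucl N → ℝ → ℝ} {x y : Eucl N}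

theorem PhiF_zero : PhiF a x y 0 = 0 := intervalIntegral.integral_same

theorem phiF_nonneg (hmono : Monotone (phiF a x y)) {t : ℝ} (ht : 0 ≤ t) :
    0 ≤ phiF a x y t :=
  (if_pos rfl : phiF a x y 0 = 0) ▸ hmono ht

theorem hasDerivAt_PhiF (hcont : Continuous (phiF a x y)) (t : ℝ) :
    HasDerivAt (PhiF a x y) (phiF a x y t) t :=
  intervalIntegral.integral_hasDerivAt_right (hcont.intervalIntegrable 0 t)
    (hcont.stronglyMeasurableAtFilter volume (𝓝 t)) hcont.continuousAt

theorem monotoneOn_PhiF (hmono : Monotone (phiF a x y)) (hcont : Continuous (phiF a x y)) :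
    MonotoneOn (PhiF a x y) (Ici 0) :=
  monotoneOn_of_hasDerivWithinAt_nonneg (convex_Ici 0)
    (fun t _ => (hasDerivAt_PhiF hcont t).continuousAt.continuousWithinAt)
    (fun t _ => (hasDerivAt_PhiF hcont t).hasDerivWithinAt)
    fun _ ht => phiF_nonneg hmono (interior_subset (s := Ici 0) ht)

theorem mul_phiF_le_PhiF {φm φp : ℝ} (hmono : Monotone (phiF a x y)) (hφm : 0 < φm)
    (hΦ1 : ∀ t, 0 < t →
      φm ≤ t * phiF a x y t / PhiF a x y t ∧ t * phiF a x y t / PhiF a x y t ≤ φp)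
    {t : ℝ} (ht : 0 < t) : t * phiF a x y t ≤ φp * PhiF a x y t := by
  obtain ⟨hlow, hup⟩ := hΦ1 t ht
  have hpos : 0 < PhiF a x y t := by
    by_contra! h
    have := div_nonpos_of_nonneg_of_nonpos (mul_nonneg ht.le (phiF_nonneg hmono ht.le)) h
    linarith
  rwa [div_le_iff₀ hpos] at hup

theorem PhiF_mul_le_rpow_mul {φm φp : ℝ} (hmono : Monotone (phiF a x y))
    (hcont : Continuous (phiF a x y)) (hφm : 0 < φm)
    (hΦ1 : ∀ t, 0 < t →
      φm ≤ t * phiF a x y t / PhiF a x y t ∧ t * phiF a x y t / PhiF a x y t ≤ φp)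
    {R t : ℝ} (hR : 1 ≤ R) (ht : 0 ≤ t) : PhiF a x y (R * t) ≤ R ^ φp * PhiF a x y t := by
  rcases ht.eq_or_lt with rfl | ht
  · simp [PhiF_zero]
  exact apply_mul_le_rpow_mul_of_mul_deriv_le (fun t _ => hasDerivAt_PhiF hcont t)
    (fun _ ht => mul_phiF_le_PhiF hmono hφm hΦ1 ht) hR ht

end Orlicz

theorem lux_le_ofReal {m : ℝ → ℝ≥0∞} {μ : ℝ} (hμ : 0 < μ) (h : m μ ≤ 1) :
    lux m ≤ ENNReal.ofReal μ :=
  sInf_le ⟨μ, hμ, rfl, h⟩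

theorem exists_lt_of_lux_lt {m : ℝ → ℝ≥0∞} {R : ℝ} (h : lux m < ENNReal.ofReal R) :
    ∃ μ, 0 < μ ∧ μ < R ∧ m μ ≤ 1 := by
  obtain ⟨_, ⟨μ, hμ, rfl, hm⟩, hlt⟩ := sInf_lt_iff.1 h
  exact ⟨μ, hμ, (ENNReal.ofReal_lt_ofReal_iff_of_nonneg hμ.le).1 hlt, hm⟩

section Modular

variable {a : Eucl N → Eucl N → ℝ → ℝ} {s : ℝ} {Ω : Set (Eucl N)} {β : Eucl N → ℝ}

theorem rhoS_mul_le (hβ0 : ∀ᵐ x ∂(volume.restrict Ωᶜ), 0 ≤ β x) {r c : ℝ} (hr : 0 ≤ r)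
    (hc : 0 ≤ c) (hΦ : ∀ x y t, 0 ≤ t → PhiF a x y (r * t) ≤ c * PhiF a x y t)
    (u : Eucl N → ℝ) :
    rhoS a s Ω β (fun x => r * u x) ≤ ENNReal.ofReal c * rhoS a s Ω β u := by
  have key : ∀ x y t w D, 0 ≤ t → 0 ≤ w → 0 ≤ D →
      ENNReal.ofReal (w * PhiF a x y (r * t) / D)
        ≤ ENNReal.ofReal c * ENNReal.ofReal (w * PhiF a x y t / D) := by
    intro x y t w D ht hw hD
    rw [← ENNReal.ofReal_mul hc, ← mul_div_assoc, mul_left_comm]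
    gcongr
    exact hΦ x y t ht
  have habs : ∀ v w : ℝ, |r * v - r * w| = r * |v - w| := fun v w => by
    rw [← mul_sub, abs_mul, abs_of_nonneg hr]
  simp only [rhoS, modQ, modO, modB, mul_add, ← lintegral_const_mul' _ _ ENNReal.ofReal_ne_top]
  gcongr ?_ + ?_ + ?_
  · refine lintegral_mono fun p => ?_
    simpa [habs, mul_div_assoc] using
      key p.1 p.2 (|u p.1 - u p.2| / dist p.1 p.2 ^ s) 1 (dist p.1 p.2 ^ (N : ℝ))
        (by positivity) zero_le_one (by positivity)
  · refine lintegral_mono fun x => ?_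
    simpa [abs_mul, abs_of_nonneg hr] using
      key x x |u x| 1 1 (abs_nonneg _) zero_le_one zero_le_one
  · refine lintegral_mono_ae (hβ0.mono fun x hβx => ?_)
    simpa [abs_mul, abs_of_nonneg hr] using
      key x x |u x| (β x) 1 (abs_nonneg _) hβx zero_le_one

theorem ofReal_rpow_le_rhoS_of_ofReal_lt_normM
    (hβ0 : ∀ᵐ x ∂(volume.restrict Ωᶜ), 0 ≤ β x) {φm φp : ℝ}
    (hmono : ∀ x y, Monotone (phiF a x y)) (hcont : ∀ x y, Continuous (phiF a x y))
    (hφm : 0 < φm)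
    (hΦ1 : ∀ x y t, 0 < t →
      φm ≤ t * phiF a x y t / PhiF a x y t ∧ t * phiF a x y t / PhiF a x y t ≤ φp)
    {u : Eucl N → ℝ} {r : ℝ} (hr : 0 < r) (hr1 : r ≤ 1)
    (h : ENNReal.ofReal r < normM a s Ω β u) :
    ENNReal.ofReal (r ^ φp) ≤ rhoS a s Ω β u := by
  have hone : 1 < rhoS a s Ω β (fun x => r⁻¹ * u x) := by
    by_contra! hle
    simp_rw [← div_eq_inv_mul] at hle
    exact h.not_ge (lux_le_ofReal hr hle)
  have hscale := rhoS_mul_le (s := s) hβ0 (inv_nonneg.2 hr.le) (by positivity : 0 ≤ r⁻¹ ^ φp)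
    (fun x y t ht => PhiF_mul_le_rpow_mul (hmono x y) (hcont x y) hφm (hΦ1 x y)
      ((one_le_inv₀ hr).2 hr1) ht) u
  calc ENNReal.ofReal (r ^ φp) = ENNReal.ofReal (r ^ φp) * 1 := (mul_one _).symm
    _ ≤ ENNReal.ofReal (r ^ φp) * (ENNReal.ofReal (r⁻¹ ^ φp) * rhoS a s Ω β u) := by
        gcongr
        exact hone.le.trans hscale
    _ = rhoS a s Ω β u := by
        rw [← mul_assoc, ← ENNReal.ofReal_mul (by positivity),
          ← Real.mul_rpow hr.le (by positivity), mul_inv_cancel₀ hr.ne', Real.one_rpow,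
          ENNReal.ofReal_one, one_mul]

theorem rhoS_le_one_of_normM_lt_one (hβ0 : ∀ᵐ x ∂(volume.restrict Ωᶜ), 0 ≤ β x)
    (hmono : ∀ x y, Monotone (phiF a x y)) (hcont : ∀ x y, Continuous (phiF a x y))
    {u : Eucl N → ℝ} (h : normM a s Ω β u < 1) : rhoS a s Ω β u ≤ 1 := by
  obtain ⟨μ, hμ, hμ1, hle⟩ := exists_lt_of_lux_lt (R := 1) (ENNReal.ofReal_one ▸ h)
  have hu : u = fun x => μ * (u x / μ) := funext fun x => by field_simp
  have hΦ : ∀ x y t, 0 ≤ t → PhiF a x y (μ * t) ≤ 1 * PhiF a x y t := fun x y t ht => by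
    rw [one_mul]
    exact monotoneOn_PhiF (hmono x y) (hcont x y) (mul_nonneg hμ.le ht) ht
      (mul_le_of_le_one_left ht hμ1.le)
  calc rhoS a s Ω β u = rhoS a s Ω β (fun x => μ * (u x / μ)) := congrArg _ hu
    _ ≤ ENNReal.ofReal 1 * rhoS a s Ω β (fun x => u x / μ) :=
        rhoS_mul_le hβ0 hμ.le zero_le_one hΦ _
    _ ≤ 1 := by rwa [ENNReal.ofReal_one, one_mul]

theorem toReal_rhoS_div_two_sub_le_Jlam {f : Eucl N → ℝ → ℝ} {lam : ℝ} {u : Eucl N → ℝ}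
    (h : rhoS a s Ω β u ≠ ⊤) :
    (rhoS a s Ω β u).toReal / 2 - lam * ∫ x in Ω, Ff f x (u x) ≤ Jlam a s Ω β f lam u := by
  obtain ⟨hQO, hB⟩ := ENNReal.add_ne_top.1 h
  obtain ⟨hQ, hO⟩ := ENNReal.add_ne_top.1 hQO
  rw [rhoS, ENNReal.toReal_add hQO hB, ENNReal.toReal_add hQ hO, Jlam]
  have : 0 ≤ (modO a Ω u 1).toReal + (modB a Ω β u 1).toReal := by positivity
  linarith

end Modular

theorem integral_le_toReal_lintegral_ofReal {α : Type*} [MeasurableSpace α] {μ : Measure α}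
    (f : α → ℝ) : ∫ x, f x ∂μ ≤ (∫⁻ x, ENNReal.ofReal (f x) ∂μ).toReal := by
  by_cases hf : Integrable f μ
  · rw [integral_eq_lintegral_pos_part_sub_lintegral_neg_part hf]
    exact sub_le_self _ ENNReal.toReal_nonneg
  · rw [integral_undef hf]
    exact ENNReal.toReal_nonneg

section VariableExponent

variable {Ω : Set (Eucl N)} {q : Eucl N → ℝ}

theorem lintegral_rpow_le_one_of_normq_lt_one (hΩ : MeasurableSet Ω) (hq : ∀ x ∈ Ω, 0 ≤ q x)
    {u : Eucl N → ℝ} (h : normq Ω q u < 1) : ∫⁻ x in Ω, ENNReal.ofReal (|u x| ^ q x) ≤ 1 := by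
  obtain ⟨μ, hμ, hμ1, hle⟩ := exists_lt_of_lux_lt (R := 1) (ENNReal.ofReal_one ▸ h)
  refine le_trans (setLIntegral_mono' hΩ fun x hx => ?_) hle
  have habs : |u x| ≤ |u x / μ| := by
    rw [abs_div, abs_of_pos hμ]
    exact le_div_self (abs_nonneg _) hμ hμ1.le
  exact ENNReal.ofReal_le_ofReal (Real.rpow_le_rpow (abs_nonneg _) habs (hq x hx))

theorem setIntegral_le_of_le_mul_rpow (hΩ : MeasurableSet Ω) (hq : ∀ x ∈ Ω, 0 ≤ q x)
    {g u : Eucl N → ℝ} {C : ℝ} (hC : 0 ≤ C) (hg : ∀ x ∈ Ω, g x ≤ C * |u x| ^ q x)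
    (hu : normq Ω q u < 1) : ∫ x in Ω, g x ≤ C := by
  have hlint : ∫⁻ x in Ω, ENNReal.ofReal (g x) ≤ ENNReal.ofReal C :=
    calc ∫⁻ x in Ω, ENNReal.ofReal (g x)
        ≤ ∫⁻ x in Ω, ENNReal.ofReal C * ENNReal.ofReal (|u x| ^ q x) :=
          setLIntegral_mono' hΩ fun x hx => by
            rw [← ENNReal.ofReal_mul hC]
            exact ENNReal.ofReal_le_ofReal (hg x hx)
      _ = ENNReal.ofReal C * ∫⁻ x in Ω, ENNReal.ofReal (|u x| ^ q x) :=
          lintegral_const_mul' _ _ ENNReal.ofReal_ne_top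
      _ ≤ ENNReal.ofReal C :=
          mul_le_of_le_one_right' (lintegral_rpow_le_one_of_normq_lt_one hΩ hq hu)
  exact (integral_le_toReal_lintegral_ofReal g).trans (ENNReal.toReal_le_of_le_ofReal hC hlint)

end VariableExponent

theorem statement11_general
    (N : ℕ)
    (Ω : Set (Eucl N)) (hΩo : IsOpen Ω)
    (s : ℝ)
    (a : Eucl N → Eucl N → ℝ → ℝ)
    (hmono : ∀ x y, StrictMono (phiF a x y))
    (hcont : ∀ x y, Continuous (phiF a x y))
    (β : Eucl N → ℝ)
    (hβ0 : ∀ᵐ x ∂(volume.restrict Ωᶜ), 0 ≤ β x)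
    (φm φp : ℝ) (hφm : 1 < φm)
    (hΦ1 : ∀ x y t, 0 < t →
      φm ≤ t * phiF a x y t / PhiF a x y t ∧ t * phiF a x y t / PhiF a x y t ≤ φp)
    (q : Eucl N → ℝ) (hq1 : ∀ x ∈ closure Ω, 1 < q x)
    (f : Eucl N → ℝ → ℝ)
    (c₂ : ℝ) (hc₂ : 0 < c₂)
    (hF : ∀ x ∈ Ω, ∀ t : ℝ, Ff f x t ≤ c₂ * |t| ^ q x)
    (c : ℝ) (hc : 0 < c)
    (hemb : ∀ u ∈ XsetM a s Ω β, normq Ω q u ≤ ENNReal.ofReal c * normM a s Ω β u) :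
    ∃ ρ α lamstar : ℝ, ρ ∈ Set.Ioo (0:ℝ) 1 ∧ 0 < α ∧ 0 < lamstar ∧
      ∀ lam ∈ Set.Ioo (0:ℝ) lamstar, ∀ u ∈ XsetM a s Ω β,
        normM a s Ω β u = ENNReal.ofReal ρ → α ≤ Jlam a s Ω β f lam u := by
  set ρ : ℝ := (2 * (c + 1))⁻¹
  have hρ : 0 < ρ := by positivity
  have hcρ : c * ρ < 1 := by
    rw [← div_eq_mul_inv, div_lt_one (by positivity)]
    linarith
  have hρ1 : ρ < 1 := by
    rw [inv_lt_one₀ (by positivity)]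
    linarith
  set P : ℝ := (ρ / 2) ^ φp
  have hP : 0 < P := by positivity
  refine ⟨ρ, P / 4, P / (4 * c₂), ⟨hρ, hρ1⟩, by positivity, by positivity, ?_⟩
  rintro lam ⟨hlam0, hlam⟩ u hu hnorm
  have hmono' : ∀ x y, Monotone (phiF a x y) := fun x y => (hmono x y).monotone
  have hlow : ENNReal.ofReal P ≤ rhoS a s Ω β u :=
    ofReal_rpow_le_rhoS_of_ofReal_lt_normM hβ0 hmono' hcont (by linarith) hΦ1 (by positivity)
      (by linarith) (hnorm ▸ ENNReal.ofReal_lt_ofReal_iff'.2 ⟨by linarith, hρ⟩)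
  have hfin : rhoS a s Ω β u ≠ ⊤ :=
    ne_top_of_le_ne_top ENNReal.one_ne_top
      (rhoS_le_one_of_normM_lt_one hβ0 hmono' hcont (hnorm ▸ ENNReal.ofReal_lt_one.2 hρ1))
  have hsource : ∫ x in Ω, Ff f x (u x) ≤ c₂ := by
    refine setIntegral_le_of_le_mul_rpow hΩo.measurableSet
      (fun x hx => (zero_lt_one.trans (hq1 x (subset_closure hx))).le) hc₂.le
      (fun x hx => hF x hx (u x)) ?_
    calc normq Ω q u ≤ ENNReal.ofReal c * normM a s Ω β u := hemb u hu
      _ = ENNReal.ofReal (c * ρ) := by rw [hnorm, ENNReal.ofReal_mul hc.le]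
      _ < 1 := ENNReal.ofReal_lt_one.2 hcρ
  have hJ := toReal_rhoS_div_two_sub_le_Jlam (f := f) (lam := lam) hfin
  have hPle : P ≤ (rhoS a s Ω β u).toReal := (ENNReal.ofReal_le_iff_le_toReal hfin).1 hlow
  have hlamc₂ : lam * c₂ ≤ P / 4 := by
    rw [lt_div_iff₀ (by positivity)] at hlam
    linarith
  linarith [mul_le_mul_of_nonneg_left hsource hlam0.le]

/-- mountain-pass geometry — `J_λ ≥ α > 0` on a small sphere `‖u‖ = ρ`
for all small `λ`. -/
theorem statement11
    (N : ℕ) (hN : 1 ≤ N)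
    (Ω : Set (Eucl N)) (hΩo : IsOpen Ω) (hΩb : Bornology.IsBounded Ω) (hΩne : Ω.Nonempty)
    (s : ℝ) (hs : s ∈ Set.Ioo (0:ℝ) 1)
    (a : Eucl N → Eucl N → ℝ → ℝ)
    (ha : Measurable fun p : Eucl N × Eucl N × ℝ => a p.1 p.2.1 p.2.2)
    (hmono : ∀ x y, StrictMono (phiF a x y))
    (hcont : ∀ x y, Continuous (phiF a x y))
    (hsurj : ∀ x y, Function.Surjective (phiF a x y))
    (β : Eucl N → ℝ) (hβm : Measurable β)
    (hβb : ∃ C : ℝ, ∀ᵐ x ∂(volume.restrict Ωᶜ), |β x| ≤ C)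
    (hβ0 : ∀ᵐ x ∂(volume.restrict Ωᶜ), 0 ≤ β x)
    (φm φp : ℝ) (hφm : 1 < φm) (hφmp : φm ≤ φp)
    (hΦ1 : ∀ x y t, 0 < t →
      φm ≤ t * phiF a x y t / PhiF a x y t ∧ t * phiF a x y t / PhiF a x y t ≤ φp)
    (q : Eucl N → ℝ) (hqc : ContinuousOn q (closure Ω)) (hq1 : ∀ x ∈ closure Ω, 1 < q x)
    (qp : ℝ) (hqp_le : ∀ x ∈ closure Ω, q x ≤ qp)
    (f : Eucl N → ℝ → ℝ)
    (hfmeas : ∀ t : ℝ, Measurable fun x => f x t)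
    (hfcont : ∀ x : Eucl N, Continuous fun t => f x t)
    (c₂ : ℝ) (hc₂ : 0 < c₂)
    (hF : ∀ x ∈ Ω, ∀ t : ℝ, Ff f x t ≤ c₂ * |t| ^ q x)
    (c : ℝ) (hc : 0 < c)
    (hemb : ∀ u ∈ XsetM a s Ω β, normq Ω q u ≤ ENNReal.ofReal c * normM a s Ω β u) :
    ∃ ρ α lamstar : ℝ, ρ ∈ Set.Ioo (0:ℝ) 1 ∧ 0 < α ∧ 0 < lamstar ∧
      ∀ lam ∈ Set.Ioo (0:ℝ) lamstar, ∀ u ∈ XsetM a s Ω β,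
        normM a s Ω β u = ENNReal.ofReal ρ → α ≤ Jlam a s Ω β f lam u :=
  statement11_general N Ω hΩo s a hmono hcont β hβ0 φm φp hφm hΦ1 q hq1 f c₂ hc₂ hF c hc hemb
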